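/- arXiv:2206.05563 — 4 statements merged into one kernel-verified Lean document; each statement's English description precedes it below -/
import Mathlib

section
/- Let V : ℝ² → ℝ be a C^∞ function. Then V is harmonic (V_xx + V_yy = 0) if and only if, on the open set where ∇V ≠ 0, the rescaled gradient vector field X = ρ·(V_x ∂/∂x + V_y ∂/∂y) and the rescaled Hamiltonian vector field Y = ρ·(−V_y ∂/∂x + V_x ∂/∂y), with ρ = (V_x² + V_y²)⁻¹, commute: [X, Y] = 0. -/
noncomputable section

/-- Partial derivative in the `x` direction. -/
def pdx (f : ℝ × ℝ → ℝ) (p : ℝ × ℝ) : ℝ := fderiv ℝ f p (1, 0)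

/-- Partial derivative in the `y` direction. -/
def pdy (f : ℝ × ℝ → ℝ) (p : ℝ × ℝ) : ℝ := fderiv ℝ f p (0, 1)

/-- Lie bracket of planar vector fields: [X,Y] = DY·X − DX·Y. -/
def lieBracket (X Y : ℝ × ℝ → ℝ × ℝ) (p : ℝ × ℝ) : ℝ × ℝ :=
  fderiv ℝ Y p (X p) - fderiv ℝ X p (Y p)

lemma contDiff_pdx {f : ℝ × ℝ → ℝ} (hf : ContDiff ℝ (⊤ : ℕ∞) f) : ContDiff ℝ (⊤ : ℕ∞) (pdx f) :=
  (hf.fderiv_right (by simp)).clm_apply contDiff_const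

lemma contDiff_pdy {f : ℝ × ℝ → ℝ} (hf : ContDiff ℝ (⊤ : ℕ∞) f) : ContDiff ℝ (⊤ : ℕ∞) (pdy f) :=
  (hf.fderiv_right (by simp)).clm_apply contDiff_const

lemma apply_pair {M : Type*} [NormedAddCommGroup M] [NormedSpace ℝ M]
    (L : ℝ × ℝ →L[ℝ] M) (a b : ℝ) : L (a, b) = a • L (1, 0) + b • L (0, 1) := by
  have h : (a, b) = a • ((1:ℝ), (0:ℝ)) + b • ((0:ℝ), (1:ℝ)) := by
    simp [Prod.ext_iff]
  rw [h, map_add, map_smul, map_smul]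

set_option maxHeartbeats 2000000 in
lemma key (V : ℝ × ℝ → ℝ) (hV : ContDiff ℝ (⊤ : ℕ∞) V) (p : ℝ × ℝ)
    (hp : (pdx V p) ^ 2 + (pdy V p) ^ 2 ≠ 0) :
    lieBracket
      (fun q => ((pdx V q) ^ 2 + (pdy V q) ^ 2)⁻¹ • ((pdx V q, pdy V q) : ℝ × ℝ))
      (fun q => ((pdx V q) ^ 2 + (pdy V q) ^ 2)⁻¹ • ((-(pdy V q), pdx V q) : ℝ × ℝ)) p
    = ((((pdx V p) ^ 2 + (pdy V p) ^ 2) ^ 2)⁻¹ * (pdx (pdx V) p + pdy (pdy V) p))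
        • ((pdy V p, -(pdx V p)) : ℝ × ℝ) := by
  have hU : ContDiff ℝ (⊤ : ℕ∞) (pdx V) := contDiff_pdx hV
  have hW : ContDiff ℝ (⊤ : ℕ∞) (pdy V) := contDiff_pdy hV
  have hUd : Differentiable ℝ (pdx V) := hU.differentiable (by simp)
  have hWd : Differentiable ℝ (pdy V) := hW.differentiable (by simp)
  set LU := fderiv ℝ (pdx V) p with hLUdef
  set LW := fderiv ℝ (pdy V) p with hLWdef
  have hLU : HasFDerivAt (pdx V) LU p := (hUd p).hasFDerivAt
  have hLW : HasFDerivAt (pdy V) LW p := (hWd p).hasFDerivAt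
  -- symmetry of second derivatives
  have hV' : ContDiff ℝ (⊤ : ℕ∞) (fderiv ℝ V) := hV.fderiv_right (by simp)
  have hd2 : Differentiable ℝ (fderiv ℝ V) := hV'.differentiable (by simp)
  have hfx : ∀ e, LU e = fderiv ℝ (fderiv ℝ V) p e (1, 0) := by
    intro e
    have h0 : fderiv ℝ (fun q => (fderiv ℝ V q) ((1:ℝ), (0:ℝ))) p
        = (fderiv ℝ V p).comp (fderiv ℝ (fun _ : ℝ × ℝ => ((1:ℝ), (0:ℝ))) p)
          + (fderiv ℝ (fderiv ℝ V) p).flip ((1:ℝ), (0:ℝ)) :=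
      fderiv_clm_apply (hd2 p) (differentiableAt_const _)
    rw [hLUdef]
    show fderiv ℝ (fun q => (fderiv ℝ V q) ((1:ℝ), (0:ℝ))) p e = _
    rw [h0]
    simp
  have hfy : ∀ e, LW e = fderiv ℝ (fderiv ℝ V) p e (0, 1) := by
    intro e
    have h0 : fderiv ℝ (fun q => (fderiv ℝ V q) ((0:ℝ), (1:ℝ))) p
        = (fderiv ℝ V p).comp (fderiv ℝ (fun _ : ℝ × ℝ => ((0:ℝ), (1:ℝ))) p)
          + (fderiv ℝ (fderiv ℝ V) p).flip ((0:ℝ), (1:ℝ)) :=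
      fderiv_clm_apply (hd2 p) (differentiableAt_const _)
    rw [hLWdef]
    show fderiv ℝ (fun q => (fderiv ℝ V q) ((0:ℝ), (1:ℝ))) p e = _
    rw [h0]
    simp
  have hsym : LW (1, 0) = LU (0, 1) := by
    rw [hfx, hfy]
    exact second_derivative_symmetric
      (fun y => (hV.differentiable (by simp) y).hasFDerivAt) (hd2 p).hasFDerivAt _ _
  -- derivative of R = (pdx V)^2 + (pdy V)^2
  have hR : HasFDerivAt (fun q => (pdx V q) ^ 2 + (pdy V q) ^ 2)
      ((pdx V p • LU + pdx V p • LU) + (pdy V p • LW + pdy V p • LW)) p := by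
    have := (hLU.fun_mul hLU).fun_add (hLW.fun_mul hLW)
    simpa [pow_two] using this
  have hρ : HasFDerivAt (fun q => ((pdx V q) ^ 2 + (pdy V q) ^ 2)⁻¹)
      ((-(((pdx V p) ^ 2 + (pdy V p) ^ 2) ^ 2)⁻¹) •
        ((pdx V p • LU + pdx V p • LU) + (pdy V p • LW + pdy V p • LW))) p :=
    (hasDerivAt_inv hp).comp_hasFDerivAt p hR
  have hG : HasFDerivAt (fun q => ((pdx V q, pdy V q) : ℝ × ℝ)) (LU.prod LW) p :=
    hLU.prodMk hLW
  have hH : HasFDerivAt (fun q => ((-(pdy V q), pdx V q) : ℝ × ℝ)) ((-LW).prod LU) p :=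
    hLW.fun_neg.prodMk hLU
  have hX := hρ.fun_smul hG
  have hY := hρ.fun_smul hH
  rw [lieBracket, hX.fderiv, hY.fderiv]
  -- reduce to scalars
  set a := pdx V p with ha
  set b := pdy V p with hb
  set s := LU (1, 0) with hs
  set t := LU (0, 1) with ht
  set c := LW (0, 1) with hc
  have eLU : ∀ α β : ℝ, LU (α, β) = α * s + β * t := by
    intro α β; rw [apply_pair]; simp [smul_eq_mul, hs, ht]
  have eLW : ∀ α β : ℝ, LW (α, β) = α * t + β * c := by
    intro α β; rw [apply_pair, hsym]; simp [smul_eq_mul, hc]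
  have hΔ : pdx (pdx V) p + pdy (pdy V) p = s + c := by
    rw [pdx, pdy, ← hLUdef, ← hLWdef]
  rw [hΔ]
  clear_value LU LW a b s t c
  clear hLUdef hLWdef ha hb hs ht hc hΔ hR hρ hX hY hLU hLW hfx hfy hG hH hsym
  simp only [ContinuousLinearMap.add_apply, ContinuousLinearMap.smul_apply,
    ContinuousLinearMap.smulRight_apply, ContinuousLinearMap.prod_apply,
    ContinuousLinearMap.neg_apply]
  simp only [Prod.smul_mk, smul_eq_mul, eLU, eLW, Prod.mk_add_mk,
    Prod.mk_sub_mk, Prod.mk.injEq]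
  constructor <;> · field_simp; ring

theorem harmonic_iff_rescaled_gradient_and_hamiltonian_commute
    (V : ℝ × ℝ → ℝ) (hV : ContDiff ℝ (⊤ : ℕ∞) V) :
    (∀ p, pdx (pdx V) p + pdy (pdy V) p = 0) ↔
      (∀ p : ℝ × ℝ, (pdx V p) ^ 2 + (pdy V p) ^ 2 ≠ 0 →
        lieBracket
          (fun q => ((pdx V q) ^ 2 + (pdy V q) ^ 2)⁻¹ • ((pdx V q, pdy V q) : ℝ × ℝ))
          (fun q => ((pdx V q) ^ 2 + (pdy V q) ^ 2)⁻¹ • ((-(pdy V q), pdx V q) : ℝ × ℝ))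
          p = 0) := by
  constructor
  · intro h p hp
    rw [key V hV p hp, h p]
    simp
  · intro h p
    have hΔ0 : ∀ q, (pdx V q) ^ 2 + (pdy V q) ^ 2 ≠ 0 →
        pdx (pdx V) q + pdy (pdy V) q = 0 := by
      intro q hq
      have h1 := h q hq
      rw [key V hV q hq] at h1
      rcases smul_eq_zero.1 h1 with h2 | h2
      · rcases mul_eq_zero.1 h2 with h3 | h3
        · exact absurd h3 (inv_ne_zero (pow_ne_zero 2 hq))
        · exact h3
      · exfalso
        apply hq
        rw [Prod.ext_iff] at h2
        simp only [Prod.fst_zero, Prod.snd_zero, neg_eq_zero] at h2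
        rw [h2.1, h2.2]
        ring
    by_cases hcl : p ∈ closure {q : ℝ × ℝ | (pdx V q) ^ 2 + (pdy V q) ^ 2 ≠ 0}
    · have hcont : Continuous (fun q => pdx (pdx V) q + pdy (pdy V) q) :=
        ((contDiff_pdx (contDiff_pdx hV)).continuous).add
          ((contDiff_pdy (contDiff_pdy hV)).continuous)
      have := Set.EqOn.closure (s := {q : ℝ × ℝ | (pdx V q) ^ 2 + (pdy V q) ^ 2 ≠ 0})
        (f := fun q => pdx (pdx V) q + pdy (pdy V) q) (g := fun _ => (0:ℝ))
        (fun q hq => hΔ0 q hq) hcont continuous_const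
      exact this hcl
    · -- gradient vanishes near p
      have h1 : p ∈ ({q : ℝ × ℝ | (pdx V q) ^ 2 + (pdy V q) ^ 2 ≠ 0} : Set (ℝ × ℝ))ᶜ ∩
          (closure {q : ℝ × ℝ | (pdx V q) ^ 2 + (pdy V q) ^ 2 ≠ 0})ᶜ := by
        constructor
        · intro hmem
          exact hcl (subset_closure hmem)
        · exact hcl
      have hmem : p ∈ interior ({q : ℝ × ℝ | (pdx V q) ^ 2 + (pdy V q) ^ 2 ≠ 0} :
          Set (ℝ × ℝ))ᶜ := by
        rw [interior_compl]
        exact h1.2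
      have hev : ∀ᶠ q in nhds p, (pdx V q) ^ 2 + (pdy V q) ^ 2 = 0 := by
        have hnh := mem_interior_iff_mem_nhds.1 hmem
        filter_upwards [hnh] with q hq
        exact not_not.1 hq
      have hux : pdx V =ᶠ[nhds p] fun _ => (0:ℝ) := by
        filter_upwards [hev] with q hq
        nlinarith [sq_nonneg (pdx V q), sq_nonneg (pdy V q)]
      have hwy : pdy V =ᶠ[nhds p] fun _ => (0:ℝ) := by
        filter_upwards [hev] with q hq
        nlinarith [sq_nonneg (pdx V q), sq_nonneg (pdy V q)]
      have h1 : pdx (pdx V) p = 0 := by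
        rw [pdx, hux.fderiv_eq, fderiv_fun_const]
        simp
      have h2 : pdy (pdy V) p = 0 := by
        rw [pdy, hwy.fderiv_eq, fderiv_fun_const]
        simp
      rw [h1, h2, add_zero]
end
end

section
/- Let X = a∂x + b∂y be a C^∞ vector field on an open set U ⊆ ℝ² and f : U → ℝ a C^∞ first integral (a f_x + b f_y = 0) with ∇f nowhere vanishing on U. Then the vector field Y = ∇f / ‖∇f‖² = (f_x² + f_y²)⁻¹ (f_x ∂x + f_y ∂y) is an infinitesimal symmetry of X: [X, Y] = ν X for some C^∞ function ν on the set where X ≠ 0. -/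
set_option maxHeartbeats 1000000

noncomputable section

lemma planar_parallel {g1 g2 x1 x2 w1 w2 : ℝ}
    (hg : g1^2 + g2^2 ≠ 0) (hx : x1^2 + x2^2 ≠ 0)
    (h1 : x1*g1 + x2*g2 = 0) (h2 : w1*g1 + w2*g2 = 0) :
    w1 = ((w1*x1 + w2*x2)/(x1^2+x2^2)) * x1 ∧
    w2 = ((w1*x1 + w2*x2)/(x1^2+x2^2)) * x2 := by
  have h3 : g1*(w1*x2 - w2*x1) = 0 := by linear_combination x2*h2 - w2*h1
  have h4 : g2*(w1*x2 - w2*x1) = 0 := by linear_combination w1*h1 - x1*h2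
  have hdet : w1*x2 - w2*x1 = 0 := by
    by_cases hg1 : g1 = 0
    · have hg2 : g2 ≠ 0 := by intro h; apply hg; rw [hg1, h]; ring
      exact (mul_eq_zero.1 h4).resolve_left hg2
    · exact (mul_eq_zero.1 h3).resolve_left hg1
  constructor
  · field_simp; linear_combination x2*hdet
  · field_simp; linear_combination (-x1)*hdet

lemma clm_plane_apply (L : ℝ × ℝ →L[ℝ] ℝ) (u v : ℝ) :
    L (u, v) = u * L (1, 0) + v * L (0, 1) := by
  have h : ((u, v) : ℝ × ℝ) = u • ((1:ℝ), (0:ℝ)) + v • ((0:ℝ), (1:ℝ)) := by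
    simp [Prod.smul_mk]
  rw [h, map_add, map_smul, map_smul, smul_eq_mul, smul_eq_mul]

theorem normalized_gradient_of_first_integral_is_symmetry
    (U : Set (ℝ × ℝ)) (hU : IsOpen U)
    (a b f : ℝ × ℝ → ℝ)
    (ha : ContDiffOn ℝ (⊤ : ℕ∞) a U) (hb : ContDiffOn ℝ (⊤ : ℕ∞) b U) (hf : ContDiffOn ℝ (⊤ : ℕ∞) f U)
    (hfi : ∀ p ∈ U, a p * pdx f p + b p * pdy f p = 0)
    (hgrad : ∀ p ∈ U, (pdx f p) ^ 2 + (pdy f p) ^ 2 ≠ 0) :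
    ∃ ν : ℝ × ℝ → ℝ,
      ContDiffOn ℝ (⊤ : ℕ∞) ν {p | p ∈ U ∧ (a p, b p) ≠ (0, 0)} ∧
      ∀ p ∈ U, (a p, b p) ≠ (0, 0) →
        lieBracket (fun q => ((a q, b q) : ℝ × ℝ))
            (fun q => ((pdx f q) ^ 2 + (pdy f q) ^ 2)⁻¹ • ((pdx f q, pdy f q) : ℝ × ℝ)) p
          = ν p • ((a p, b p) : ℝ × ℝ) := by
  classical
  set X : ℝ × ℝ → ℝ × ℝ := fun q => (a q, b q) with hXdef
  set c : ℝ × ℝ → ℝ := fun q => ((pdx f q) ^ 2 + (pdy f q) ^ 2)⁻¹ * pdx f q with hcdef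
  set d : ℝ × ℝ → ℝ := fun q => ((pdx f q) ^ 2 + (pdy f q) ^ 2)⁻¹ * pdy f q with hddef
  have hYeq : (fun q => ((pdx f q) ^ 2 + (pdy f q) ^ 2)⁻¹ • ((pdx f q, pdy f q) : ℝ × ℝ))
      = fun q => ((c q, d q) : ℝ × ℝ) := by
    funext q; simp [hcdef, hddef, Prod.smul_mk, smul_eq_mul]
  set Y : ℝ × ℝ → ℝ × ℝ := fun q => ((c q, d q) : ℝ × ℝ) with hYdef
  rw [hYeq]
  -- smoothness of the ingredients
  have hdf : ContDiffOn ℝ (⊤ : ℕ∞) (fderiv ℝ f) U := hf.fderiv_of_isOpen hU (by simp)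
  have hfx : ContDiffOn ℝ (⊤ : ℕ∞) (pdx f) U := hdf.clm_apply contDiffOn_const
  have hfy : ContDiffOn ℝ (⊤ : ℕ∞) (pdy f) U := hdf.clm_apply contDiffOn_const
  have hnorm : ContDiffOn ℝ (⊤ : ℕ∞) (fun q => (pdx f q) ^ 2 + (pdy f q) ^ 2) U :=
    (hfx.pow 2).add (hfy.pow 2)
  have hinv : ContDiffOn ℝ (⊤ : ℕ∞) (fun q => ((pdx f q) ^ 2 + (pdy f q) ^ 2)⁻¹) U :=
    hnorm.inv hgrad
  have hc : ContDiffOn ℝ (⊤ : ℕ∞) c U := hinv.mul hfx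
  have hd : ContDiffOn ℝ (⊤ : ℕ∞) d U := hinv.mul hfy
  have hX : ContDiffOn ℝ (⊤ : ℕ∞) X U := ha.prodMk hb
  have hY : ContDiffOn ℝ (⊤ : ℕ∞) Y U := hc.prodMk hd
  have hX' : ContDiffOn ℝ (⊤ : ℕ∞) (fderiv ℝ X) U := hX.fderiv_of_isOpen hU (by simp)
  have hY' : ContDiffOn ℝ (⊤ : ℕ∞) (fderiv ℝ Y) U := hY.fderiv_of_isOpen hU (by simp)
  have hL : ContDiffOn ℝ (⊤ : ℕ∞) (lieBracket X Y) U :=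
    (hY'.clm_apply hX).sub (hX'.clm_apply hY)
  -- the set V
  set V : Set (ℝ × ℝ) := {p | p ∈ U ∧ (a p, b p) ≠ (0, 0)} with hVdef
  have hVU : V ⊆ U := fun p hp => hp.1
  -- ν
  set ν : ℝ × ℝ → ℝ := fun q =>
    ((lieBracket X Y q).1 * a q + (lieBracket X Y q).2 * b q) / ((a q)^2 + (b q)^2) with hνdef
  have habV : ∀ p ∈ V, (a p)^2 + (b p)^2 ≠ 0 := by
    intro p hp h
    exact hp.2 (by
      have h1 : a p = 0 := by nlinarith [sq_nonneg (a p), sq_nonneg (b p)]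
      have h2 : b p = 0 := by nlinarith [sq_nonneg (a p), sq_nonneg (b p)]
      rw [h1, h2])
  have hL1 : ContDiffOn ℝ (⊤ : ℕ∞) (fun q => (lieBracket X Y q).1) U :=
    contDiff_fst.comp_contDiffOn hL
  have hL2 : ContDiffOn ℝ (⊤ : ℕ∞) (fun q => (lieBracket X Y q).2) U :=
    contDiff_snd.comp_contDiffOn hL
  have hν : ContDiffOn ℝ (⊤ : ℕ∞) ν V := by
    apply ContDiffOn.div
    · exact ((hL1.mul ha).add (hL2.mul hb)).mono hVU
    · exact ((ha.pow 2).add (hb.pow 2)).mono hVU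
    · exact habV
  refine ⟨ν, hν, ?_⟩
  intro p hp hXp
  have hpmem : U ∈ nhds p := hU.mem_nhds hp
  -- pointwise differentiability
  have Da : DifferentiableAt ℝ a p := (ha.contDiffAt hpmem).differentiableAt (by simp)
  have Db : DifferentiableAt ℝ b p := (hb.contDiffAt hpmem).differentiableAt (by simp)
  have Dc : DifferentiableAt ℝ c p := (hc.contDiffAt hpmem).differentiableAt (by simp)
  have Dd : DifferentiableAt ℝ d p := (hd.contDiffAt hpmem).differentiableAt (by simp)
  have Dfx : DifferentiableAt ℝ (pdx f) p := (hfx.contDiffAt hpmem).differentiableAt (by simp)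
  have Dfy : DifferentiableAt ℝ (pdy f) p := (hfy.contDiffAt hpmem).differentiableAt (by simp)
  -- value of the bracket
  have hfdY : fderiv ℝ Y p = (fderiv ℝ c p).prod (fderiv ℝ d p) :=
    (HasFDerivAt.prodMk Dc.hasFDerivAt Dd.hasFDerivAt).fderiv
  have hfdX : fderiv ℝ X p = (fderiv ℝ a p).prod (fderiv ℝ b p) :=
    (HasFDerivAt.prodMk Da.hasFDerivAt Db.hasFDerivAt).fderiv
  have hLp : lieBracket X Y p =
      (fderiv ℝ c p (X p) - fderiv ℝ a p (Y p),
       fderiv ℝ d p (X p) - fderiv ℝ b p (Y p)) := by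
    simp only [lieBracket, hfdY, hfdX, ContinuousLinearMap.prod_apply, Prod.mk_sub_mk]
  -- second derivative and symmetry
  set f'' := fderiv ℝ (fderiv ℝ f) p with hf''def
  have hev : ∀ᶠ q in nhds p, HasFDerivAt f (fderiv ℝ f q) q := by
    filter_upwards [hU.mem_nhds hp] with q hq
    exact ((hf.contDiffAt (hU.mem_nhds hq)).differentiableAt (by simp)).hasFDerivAt
  have hf''at : HasFDerivAt (fderiv ℝ f) f'' p :=
    ((hdf.contDiffAt hpmem).differentiableAt (by simp)).hasFDerivAt
  have hsymm : ∀ v w, f'' v w = f'' w v := fun v w =>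
    second_derivative_symmetric_of_eventually hev hf''at v w
  have hDpdx : ∀ v, fderiv ℝ (pdx f) p v = f'' v (1, 0) := by
    intro v
    have : fderiv ℝ (fun q => (ContinuousLinearMap.apply ℝ ℝ ((1:ℝ),(0:ℝ))) (fderiv ℝ f q)) p
        = (ContinuousLinearMap.apply ℝ ℝ ((1:ℝ),(0:ℝ))).comp f'' :=
      ((ContinuousLinearMap.apply ℝ ℝ ((1:ℝ),(0:ℝ))).hasFDerivAt.comp p hf''at).fderiv
    have h2 := congrFun (congrArg (fun (L : (ℝ×ℝ) →L[ℝ] ℝ) => (L : (ℝ×ℝ) → ℝ)) this) v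
    rw [show pdx f = fun q => fderiv ℝ f q (1, 0) from rfl]
    simpa [pdx, ContinuousLinearMap.apply] using h2
  have hDpdy : ∀ v, fderiv ℝ (pdy f) p v = f'' v (0, 1) := by
    intro v
    have : fderiv ℝ (fun q => (ContinuousLinearMap.apply ℝ ℝ ((0:ℝ),(1:ℝ))) (fderiv ℝ f q)) p
        = (ContinuousLinearMap.apply ℝ ℝ ((0:ℝ),(1:ℝ))).comp f'' :=
      ((ContinuousLinearMap.apply ℝ ℝ ((0:ℝ),(1:ℝ))).hasFDerivAt.comp p hf''at).fderiv
    have h2 := congrFun (congrArg (fun (L : (ℝ×ℝ) →L[ℝ] ℝ) => (L : (ℝ×ℝ) → ℝ)) this) v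
    rw [show pdy f = fun q => fderiv ℝ f q (0, 1) from rfl]
    simpa [pdy, ContinuousLinearMap.apply] using h2
  -- identity (1): fx*c + fy*d = 1 on U
  have h1U : ∀ q ∈ U, pdx f q * c q + pdy f q * d q = 1 := by
    intro q hq
    have h := hgrad q hq
    simp only [hcdef, hddef]
    field_simp
  have e1 : fderiv ℝ (fun q => pdx f q * c q + pdy f q * d q) p = 0 := by
    have hEq : (fun q => pdx f q * c q + pdy f q * d q) =ᶠ[nhds p] fun _ => (1:ℝ) :=
      Filter.eventually_of_mem hpmem h1U
    rw [hEq.fderiv_eq]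
    exact fderiv_const_apply 1
  have E1 : fderiv ℝ (pdx f) p (X p) * c p + pdx f p * fderiv ℝ c p (X p)
      + (fderiv ℝ (pdy f) p (X p) * d p + pdy f p * fderiv ℝ d p (X p)) = 0 := by
    have h0 := congrFun (congrArg (fun (L : (ℝ×ℝ) →L[ℝ] ℝ) => (L : (ℝ×ℝ) → ℝ)) e1) (X p)
    rw [fderiv_fun_add (Dfx.fun_mul Dc) (Dfy.fun_mul Dd), fderiv_fun_mul Dfx Dc, fderiv_fun_mul Dfy Dd] at h0
    simp only [ContinuousLinearMap.add_apply, ContinuousLinearMap.smul_apply,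
      smul_eq_mul, ContinuousLinearMap.zero_apply] at h0
    linarith
  -- identity (2): a*fx + b*fy = 0 on U, differentiated along Y p
  have e2 : fderiv ℝ (fun q => a q * pdx f q + b q * pdy f q) p = 0 := by
    have hEq : (fun q => a q * pdx f q + b q * pdy f q) =ᶠ[nhds p] fun _ => (0:ℝ) :=
      Filter.eventually_of_mem hpmem hfi
    rw [hEq.fderiv_eq]
    exact fderiv_const_apply 0
  have E2 : fderiv ℝ a p (Y p) * pdx f p + a p * fderiv ℝ (pdx f) p (Y p)
      + (fderiv ℝ b p (Y p) * pdy f p + b p * fderiv ℝ (pdy f) p (Y p)) = 0 := by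
    have h0 := congrFun (congrArg (fun (L : (ℝ×ℝ) →L[ℝ] ℝ) => (L : (ℝ×ℝ) → ℝ)) e2) (Y p)
    rw [fderiv_fun_add (Da.fun_mul Dfx) (Db.fun_mul Dfy), fderiv_fun_mul Da Dfx, fderiv_fun_mul Db Dfy] at h0
    simp only [ContinuousLinearMap.add_apply, ContinuousLinearMap.smul_apply,
      smul_eq_mul, ContinuousLinearMap.zero_apply] at h0
    linarith
  -- orthogonality of the bracket to the gradient
  have hYp : Y p = (c p, d p) := rfl
  have hXpv : X p = (a p, b p) := rfl
  have hH1 : f'' (X p) (Y p) = c p * f'' (X p) (1, 0) + d p * f'' (X p) (0, 1) :=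
    clm_plane_apply (f'' (X p)) (c p) (d p)
  have hH2 : f'' (Y p) (X p) = a p * f'' (Y p) (1, 0) + b p * f'' (Y p) (0, 1) :=
    clm_plane_apply (f'' (Y p)) (a p) (b p)
  rw [hDpdx, hDpdy] at E1 E2
  have horth : (lieBracket X Y p).1 * pdx f p + (lieBracket X Y p).2 * pdy f p = 0 := by
    rw [hLp]
    have hs := hsymm (X p) (Y p)
    simp only [hDpdx, hDpdy]
    linear_combination E1 - E2 + hH1 - hH2 - hs
  -- conclude
  have hxab : (a p)^2 + (b p)^2 ≠ 0 := habV p ⟨hp, hXp⟩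
  obtain ⟨hw1, hw2⟩ := planar_parallel (hgrad p hp) hxab (hfi p hp) horth
  have hνp : ν p = ((lieBracket X Y p).1 * a p + (lieBracket X Y p).2 * b p)
      / ((a p)^2 + (b p)^2) := rfl
  have : lieBracket X Y p = (ν p * a p, ν p * b p) := by
    rw [hνp]
    exact Prod.ext hw1 hw2
  rw [this]
  simp [Prod.smul_mk, smul_eq_mul]
end
end

section
/- Let X = a∂x + b∂y and Y = c∂x + d∂y be C^∞ vector fields on an open simply connected set U ⊆ ℝ² with ad − bc nowhere zero. If [X,Y] = νX for some smooth ν (Y is an infinitesimal symmetry of X), then the 1-form ω = (ad − bc)⁻¹(−b dx + a dy) is closed on U, and hence μ = −1/(ad − bc) is an integrating factor for X (the Lie integrating factor). -/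
noncomputable section

theorem lie_integrating_factor
    (U : Set (ℝ × ℝ)) (hU : IsOpen U) (hsc : SimplyConnectedSpace U)
    (a b c d ν : ℝ × ℝ → ℝ)
    (ha : ContDiffOn ℝ (⊤ : ℕ∞) a U) (hb : ContDiffOn ℝ (⊤ : ℕ∞) b U)
    (hc : ContDiffOn ℝ (⊤ : ℕ∞) c U) (hd : ContDiffOn ℝ (⊤ : ℕ∞) d U)
    (hν : ContDiffOn ℝ (⊤ : ℕ∞) ν U)
    (hdet : ∀ p ∈ U, a p * d p - b p * c p ≠ 0)
    (hsym : ∀ p ∈ U,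
      lieBracket (fun q => ((a q, b q) : ℝ × ℝ)) (fun q => ((c q, d q) : ℝ × ℝ)) p
        = ν p • ((a p, b p) : ℝ × ℝ)) :
    ∀ p ∈ U,
      pdy (fun q => (a q * d q - b q * c q)⁻¹ * (-(b q))) p
        = pdx (fun q => (a q * d q - b q * c q)⁻¹ * a q) p := by
  intro p hp
  have hmem : U ∈ nhds p := hU.mem_nhds hp
  have haD : DifferentiableAt ℝ a p := (ha.contDiffAt hmem).differentiableAt (by simp)
  have hbD : DifferentiableAt ℝ b p := (hb.contDiffAt hmem).differentiableAt (by simp)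
  have hcD : DifferentiableAt ℝ c p := (hc.contDiffAt hmem).differentiableAt (by simp)
  have hdD : DifferentiableAt ℝ d p := (hd.contDiffAt hmem).differentiableAt (by simp)
  have haF : HasFDerivAt a (fderiv ℝ a p) p := haD.hasFDerivAt
  have hbF : HasFDerivAt b (fderiv ℝ b p) p := hbD.hasFDerivAt
  have hcF : HasFDerivAt c (fderiv ℝ c p) p := hcD.hasFDerivAt
  have hdF : HasFDerivAt d (fderiv ℝ d p) p := hdD.hasFDerivAt
  set da := fderiv ℝ a p
  set db := fderiv ℝ b p
  set dc := fderiv ℝ c p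
  set dd := fderiv ℝ d p
  have hWne : a p * d p - b p * c p ≠ 0 := hdet p hp
  have hWF : HasFDerivAt (fun q => a q * d q - b q * c q)
      ((a p • dd + d p • da) - (b p • dc + c p • db)) p := (haF.mul hdF).sub (hbF.mul hcF)
  have hWinv : HasFDerivAt (fun q => (a q * d q - b q * c q)⁻¹)
      (((1 : ℝ →L[ℝ] ℝ).smulRight (-((a p * d p - b p * c p) ^ 2)⁻¹)).comp
        ((a p • dd + d p • da) - (b p • dc + c p • db))) p :=
    (hasFDerivAt_inv hWne).comp p hWF
  have h1 : HasFDerivAt (fun q => (a q * d q - b q * c q)⁻¹ * (-(b q)))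
      ((a p * d p - b p * c p)⁻¹ • (-db) + (-(b p)) •
        (((1 : ℝ →L[ℝ] ℝ).smulRight (-((a p * d p - b p * c p) ^ 2)⁻¹)).comp
          ((a p • dd + d p • da) - (b p • dc + c p • db)))) p :=
    hWinv.mul hbF.neg
  have h2 : HasFDerivAt (fun q => (a q * d q - b q * c q)⁻¹ * a q)
      ((a p * d p - b p * c p)⁻¹ • da + a p •
        (((1 : ℝ →L[ℝ] ℝ).smulRight (-((a p * d p - b p * c p) ^ 2)⁻¹)).comp
          ((a p • dd + d p • da) - (b p • dc + c p • db)))) p :=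
    hWinv.mul haF
  have hXF : HasFDerivAt (fun q => ((a q, b q) : ℝ × ℝ)) (da.prod db) p := haF.prodMk hbF
  have hYF : HasFDerivAt (fun q => ((c q, d q) : ℝ × ℝ)) (dc.prod dd) p := hcF.prodMk hdF
  have hsymp := hsym p hp
  rw [lieBracket, hXF.fderiv, hYF.fderiv] at hsymp
  have key : ∀ (f : ℝ × ℝ →L[ℝ] ℝ) (x y : ℝ), f (x, y) = x * f (1, 0) + y * f (0, 1) := by
    intro f x y
    have hxy : ((x, y) : ℝ × ℝ) = x • ((1:ℝ), (0:ℝ)) + y • ((0:ℝ), (1:ℝ)) := by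
      simp [Prod.ext_iff]
    rw [hxy, map_add, map_smul, map_smul, smul_eq_mul, smul_eq_mul]
  have e1 : a p * dc (1,0) + b p * dc (0,1) - (c p * da (1,0) + d p * da (0,1))
      = ν p * a p := by
    have h := congrArg Prod.fst hsymp
    simp only [Prod.fst_sub, ContinuousLinearMap.prod_apply, Prod.smul_fst, smul_eq_mul] at h
    rw [key dc, key da] at h
    linarith [h]
  have e2 : a p * dd (1,0) + b p * dd (0,1) - (c p * db (1,0) + d p * db (0,1))
      = ν p * b p := by
    have h := congrArg Prod.snd hsymp
    simp only [Prod.snd_sub, ContinuousLinearMap.prod_apply, Prod.smul_snd, smul_eq_mul] at h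
    rw [key dd, key db] at h
    linarith [h]
  rw [pdy, pdx, h1.fderiv, h2.fderiv]
  simp only [ContinuousLinearMap.add_apply, ContinuousLinearMap.smul_apply,
    ContinuousLinearMap.sub_apply, ContinuousLinearMap.neg_apply,
    ContinuousLinearMap.comp_apply, ContinuousLinearMap.smulRight_apply,
    ContinuousLinearMap.one_apply, smul_eq_mul]
  field_simp
  linear_combination (a p * e2 - b p * e1)
end
end

section
/- Let u, v : U → ℝ satisfy the Cauchy–Riemann equations with u² + v² nowhere zero on U ⊆ ℝ² open. Define the 1-forms ω_X = (u²+v²)⁻¹(u dx + v dy) and ω_Y = (u²+v²)⁻¹(−v dx + u dy). Then for X = u∂x + v∂y and Y = −v∂x + u∂y one has ω_X(X) = 1, ω_X(Y) = 0, ω_Y(X) = 0, ω_Y(Y) = 1, and both ω_X and ω_Y are closed 1-forms on U. -/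
noncomputable section

theorem dual_frame_one_forms_closed
    (U : Set (ℝ × ℝ)) (hU : IsOpen U)
    (u v : ℝ × ℝ → ℝ)
    (hu : ContDiffOn ℝ (⊤ : ℕ∞) u U) (hv : ContDiffOn ℝ (⊤ : ℕ∞) v U)
    (hCR1 : ∀ p ∈ U, pdx u p = pdy v p)
    (hCR2 : ∀ p ∈ U, pdy u p = -(pdx v p))
    (hnz : ∀ p ∈ U, (u p) ^ 2 + (v p) ^ 2 ≠ 0) :
    ∀ p ∈ U,
      (((u p) ^ 2 + (v p) ^ 2)⁻¹ * u p) * u p + (((u p) ^ 2 + (v p) ^ 2)⁻¹ * v p) * v p = 1 ∧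
      (((u p) ^ 2 + (v p) ^ 2)⁻¹ * u p) * (-(v p))
        + (((u p) ^ 2 + (v p) ^ 2)⁻¹ * v p) * u p = 0 ∧
      (((u p) ^ 2 + (v p) ^ 2)⁻¹ * (-(v p))) * u p
        + (((u p) ^ 2 + (v p) ^ 2)⁻¹ * u p) * v p = 0 ∧
      (((u p) ^ 2 + (v p) ^ 2)⁻¹ * (-(v p))) * (-(v p))
        + (((u p) ^ 2 + (v p) ^ 2)⁻¹ * u p) * u p = 1 ∧
      pdy (fun q => ((u q) ^ 2 + (v q) ^ 2)⁻¹ * u q) p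
        = pdx (fun q => ((u q) ^ 2 + (v q) ^ 2)⁻¹ * v q) p ∧
      pdy (fun q => ((u q) ^ 2 + (v q) ^ 2)⁻¹ * (-(v q))) p
        = pdx (fun q => ((u q) ^ 2 + (v q) ^ 2)⁻¹ * u q) p := by
  intro p hp
  have hnzp := hnz p hp
  have hu' : DifferentiableAt ℝ u p :=
    (hu.contDiffAt (hU.mem_nhds hp)).differentiableAt (by simp)
  have hv' : DifferentiableAt ℝ v p :=
    (hv.contDiffAt (hU.mem_nhds hp)).differentiableAt (by simp)
  have hUu : HasFDerivAt u (fderiv ℝ u p) p := hu'.hasFDerivAt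
  have hUv : HasFDerivAt v (fderiv ℝ v p) p := hv'.hasFDerivAt
  have hr : HasFDerivAt (fun q => (u q) ^ 2 + (v q) ^ 2)
      ((u p • fderiv ℝ u p + u p • fderiv ℝ u p) + (v p • fderiv ℝ v p + v p • fderiv ℝ v p)) p := by
    exact ((hUu.mul hUu).add (hUv.mul hUv)).congr_of_eventuallyEq (Filter.Eventually.of_forall fun q => by simp only [Pi.add_apply, Pi.mul_apply, pow_two])
  have hrinv := (hasFDerivAt_inv hnzp).comp p hr
  have hf1 : HasFDerivAt (fun q => ((u q) ^ 2 + (v q) ^ 2)⁻¹ * u q) _ p := hrinv.mul hUu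
  have hf2 : HasFDerivAt (fun q => ((u q) ^ 2 + (v q) ^ 2)⁻¹ * v q) _ p := hrinv.mul hUv
  have hf3 : HasFDerivAt (fun q => ((u q) ^ 2 + (v q) ^ 2)⁻¹ * (-(v q))) _ p := hrinv.mul hUv.neg
  have e1 := hf1.fderiv
  have e2 := hf2.fderiv
  have e3 := hf3.fderiv
  have ha : pdx u p = pdy v p := hCR1 p hp
  have hb : pdy u p = -(pdx v p) := hCR2 p hp
  simp only [pdx, pdy] at ha hb ⊢
  refine ⟨by field_simp, by ring, by ring, by field_simp; ring, ?_, ?_⟩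
  · rw [e1, e2]
    simp only [ContinuousLinearMap.add_apply, ContinuousLinearMap.coe_comp',
      Function.comp_apply, ContinuousLinearMap.smulRight_apply,
      ContinuousLinearMap.one_apply, ContinuousLinearMap.smul_apply,
      ContinuousLinearMap.neg_apply, smul_eq_mul, ContinuousLinearMap.toSpanSingleton_apply]
    rw [ha, hb]
    field_simp
    ring
  · rw [e3, e1]
    simp only [ContinuousLinearMap.add_apply, ContinuousLinearMap.coe_comp',
      Function.comp_apply, ContinuousLinearMap.smulRight_apply,
      ContinuousLinearMap.one_apply, ContinuousLinearMap.smul_apply,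
      ContinuousLinearMap.neg_apply, smul_eq_mul, ContinuousLinearMap.toSpanSingleton_apply]
    rw [ha, hb]
    field_simp
    ring
end
end
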